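/- arXiv:2210.11172 — 9 statements merged into one kernel-verified Lean document; each statement's English description precedes it below -/
import Mathlib

section
/- If F is an initial (shifted-downward-closed under the shifting partial order) t-intersecting family of subsets of [n], then the subfamily of sets in F disjoint from [s] is (t+s)-intersecting. -/
/-!
Induction on `s`. If `A, B ∈ F` avoid `[s+1]`, the induction hypothesis gives them a common
element `x`, necessarily `x > s + 1`. Replacing `x` by `s + 1` in `B` gives `B' ≺ B`, so `B' ∈ F`
by initiality; `B'` still avoids `[s]` and, as `s + 1 ∉ A`, `|A ∩ B'| = |A ∩ B| - 1`. The induction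
hypothesis applied to `A, B'` then gives `|A ∩ B| ≥ t + s + 1`.
-/

def prec (A B : Finset ℕ) : Prop :=
  List.Forall₂ (· ≤ ·) (A.sort (· ≤ ·)) (B.sort (· ≤ ·))

open Finset

lemma prec_insert_erase (B : Finset ℕ) {x y : ℕ} (hx : x ∈ B) (hy : y ∉ B) (hyx : y ≤ x) :
    prec (insert y (B.erase x)) B := by
  induction B using Finset.induction_on_min generalizing x y with
  | empty => simp at hx
  | insert a B hmin ih =>
    have haB : a ∉ B := fun h => (hmin a h).false
    have hsortB : (insert a B).sort (· ≤ ·) = a :: B.sort (· ≤ ·) :=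
      sort_insert _ (fun b hb => (hmin b hb).le) haB
    unfold prec
    rw [hsortB]
    obtain rfl | hxa := eq_or_ne x a
    · rw [erase_insert haB, sort_insert _ (fun b hb => hyx.trans (hmin b hb).le)
        (fun h => hy (mem_insert_of_mem h))]
      exact .cons hyx (List.forall₂_same.2 fun _ _ => le_rfl)
    have hxB : x ∈ B := (mem_insert.1 hx).resolve_left hxa
    have hyB : y ∉ B := fun h => hy (mem_insert_of_mem h)
    rw [erase_insert_of_ne hxa.symm]
    obtain hya | hay := lt_or_gt_of_ne (show y ≠ a from fun h => hy (h ▸ mem_insert_self a B))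
    · rw [sort_insert _ ?_ ?_]
      · exact .cons hya.le (ih hxB haB (hmin x hxB).le)
      · simp only [mem_insert, mem_erase]
        rintro b (rfl | ⟨-, hb⟩)
        exacts [hya.le, (hya.trans (hmin b hb)).le]
      · simp only [mem_insert, mem_erase]
        rintro (h | ⟨-, h⟩)
        exacts [hya.ne h, hyB h]
    · rw [insert_comm, sort_insert _ ?_ ?_]
      · exact .cons le_rfl (ih hxB hyB hyx)
      · simp only [mem_insert, mem_erase]
        rintro b (rfl | ⟨-, hb⟩)
        exacts [hay.le, (hmin b hb).le]
      · simp only [mem_insert, mem_erase]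
        rintro (h | ⟨-, h⟩)
        exacts [hay.ne h, haB h]

section Initial

variable {n : ℕ} {F : Finset (Finset ℕ)}

lemma insert_erase_mem_of_initial (hsub : ∀ A ∈ F, A ⊆ Icc 1 n)
    (hinit : ∀ A B : Finset ℕ, A ⊆ Icc 1 n → prec A B → B ∈ F → A ∈ F)
    {B : Finset ℕ} (hB : B ∈ F) {x y : ℕ} (hx : x ∈ B) (hy : y ∉ B) (hy₀ : 1 ≤ y)
    (hyx : y ≤ x) : insert y (B.erase x) ∈ F := by
  refine hinit _ B (insert_subset_iff.2 ⟨?_, (erase_subset x B).trans (hsub B hB)⟩)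
    (prec_insert_erase B hx hy hyx) hB
  have := mem_Icc.1 (hsub B hB hx)
  exact mem_Icc.2 ⟨hy₀, by omega⟩

lemma succ_le_card_inter_of_initial (hsub : ∀ A ∈ F, A ⊆ Icc 1 n)
    (hinit : ∀ A B : Finset ℕ, A ⊆ Icc 1 n → prec A B → B ∈ F → A ∈ F) {s m : ℕ} (hm : 1 ≤ m)
    (ih : ∀ A ∈ F, ∀ B ∈ F, A ∩ Icc 1 s = ∅ → B ∩ Icc 1 s = ∅ → m ≤ #(A ∩ B))
    {A B : Finset ℕ} (hA : A ∈ F) (hB : B ∈ F) (hAs : A ∩ Icc 1 (s + 1) = ∅)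
    (hBs : B ∩ Icc 1 (s + 1) = ∅) : m + 1 ≤ #(A ∩ B) := by
  have avoid_of_succ : ∀ C : Finset ℕ, C ∩ Icc 1 (s + 1) = ∅ → C ∩ Icc 1 s = ∅ := fun C hC =>
    subset_empty.1 (hC ▸ inter_subset_inter_left (Icc_subset_Icc_right s.le_succ))
  have hmAB := ih A hA B hB (avoid_of_succ A hAs) (avoid_of_succ B hBs)
  obtain ⟨x, hxAB⟩ : (A ∩ B).Nonempty := card_pos.1 (by omega)
  obtain ⟨hxA, hxB⟩ := mem_inter.1 hxAB
  have lt_of_avoid : ∀ C : Finset ℕ, C ∩ Icc 1 (s + 1) = ∅ → ∀ z ∈ C, 1 ≤ z → s + 1 < z :=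
    fun C hC z hz hz₁ => by
      by_contra h
      exact (eq_empty_iff_forall_notMem.1 hC) z (mem_inter.2 ⟨hz, mem_Icc.2 ⟨hz₁, by omega⟩⟩)
  have hx : s + 1 < x := lt_of_avoid A hAs x hxA (mem_Icc.1 (hsub A hA hxA)).1
  have hsB : s + 1 ∉ B := fun h => (lt_of_avoid B hBs _ h (by omega)).false
  have hsA : s + 1 ∉ A := fun h => (lt_of_avoid A hAs _ h (by omega)).false
  have hB'F := insert_erase_mem_of_initial hsub hinit hB hxB hsB (by omega) hx.le
  have hB's : insert (s + 1) (B.erase x) ∩ Icc 1 s = ∅ := by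
    rw [insert_inter_of_notMem (by simp), ← subset_empty, ← avoid_of_succ B hBs]
    exact inter_subset_inter_right (erase_subset x B)
  have hAB' : A ∩ insert (s + 1) (B.erase x) = (A ∩ B).erase x := by
    rw [inter_insert_of_notMem hsA, inter_erase]
  have := ih A hA _ hB'F (avoid_of_succ A hAs) hB's
  rw [hAB', card_erase_of_mem hxAB] at this
  omega

end Initial

theorem stmt_0 (n s t : ℕ) (ht : 1 ≤ t) (F : Finset (Finset ℕ))
    (hsub : ∀ A ∈ F, A ⊆ Finset.Icc 1 n)
    (hinit : ∀ A B : Finset ℕ, A ⊆ Finset.Icc 1 n → prec A B → B ∈ F → A ∈ F)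
    (hint : ∀ A ∈ F, ∀ B ∈ F, t ≤ (A ∩ B).card) :
    ∀ A ∈ F, ∀ B ∈ F, A ∩ Finset.Icc 1 s = ∅ → B ∩ Finset.Icc 1 s = ∅ →
      t + s ≤ (A ∩ B).card := by
  induction s with
  | zero => intro A hA B hB _ _; simpa using hint A hA B hB
  | succ s ih =>
    intro A hA B hB hAs hBs
    exact succ_le_card_inter_of_initial hsub hinit (by omega) ih hA hB hAs hBs
end

section
/- If F ⊆ binom([n],k) is an initial family, then the shadow of the subfamily of sets avoiding the element 1 is contained in the link of 1: ∂F(\bar{1}) ⊆ F(1). -/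
/-!
Take `B = A \ {a}` with `A ∈ F` and `1 ∉ A`. Then `1` lies below every element of `A`, so the
sorted list of `{1} ∪ B` is `1 :: sort B`, which is coordinatewise below the sorted list of
`A = B ∪ {a}` (obtained by inserting `a` into `sort B`). Initiality gives `{1} ∪ B ∈ F`, and
removing `1` recovers `B`.
-/

section

variable {α : Type*} [LinearOrder α]

theorem List.forall₂_cons_orderedInsert {x a : α} :
    ∀ {l : List α}, l.Pairwise (· ≤ ·) → (∀ y ∈ l, x ≤ y) → x ≤ a →
      List.Forall₂ (· ≤ ·) (x :: l) (l.orderedInsert (· ≤ ·) a)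
  | [], _, _, hxa => by simp [hxa]
  | b :: t, hl, hx, hxa => by
    by_cases hab : a ≤ b
    · rw [List.orderedInsert_cons, if_pos hab]
      exact .cons hxa (List.forall₂_refl _)
    · rw [List.orderedInsert_cons, if_neg hab]
      exact .cons (hx b List.mem_cons_self)
        (forall₂_cons_orderedInsert hl.of_cons (List.pairwise_cons.mp hl).1 (le_of_not_ge hab))

theorem Finset.sort_insert_eq_orderedInsert {a : α} {s : Finset α} (ha : a ∉ s) :
    (insert a s).sort (· ≤ ·) = (s.sort (· ≤ ·)).orderedInsert (· ≤ ·) a := by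
  refine List.Perm.eq_of_pairwise' (Finset.pairwise_sort _ _)
    ((Finset.pairwise_sort s (· ≤ ·)).orderedInsert a _) ?_
  refine ((Finset.sort_perm_toList _ _).trans ?_).trans (List.perm_orderedInsert _ _ _).symm
  exact (Finset.toList_insert ha).trans (.cons a (Finset.sort_perm_toList _ _).symm)

end

theorem prec_insert_erase_of_forall_lt {A : Finset ℕ} {a m : ℕ} (ha : a ∈ A)
    (hm : ∀ x ∈ A, m < x) : prec (insert m (A.erase a)) A := by
  have hm_erase : ∀ x ∈ A.erase a, m ≤ x := fun x hx => (hm x (Finset.mem_of_mem_erase hx)).le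
  have hm_notMem : m ∉ A.erase a := fun h => lt_irrefl m (hm m (Finset.mem_of_mem_erase h))
  unfold prec
  rw [Finset.sort_insert _ hm_erase hm_notMem, ← Finset.insert_erase ha,
    Finset.sort_insert_eq_orderedInsert (Finset.notMem_erase a A), Finset.erase_insert_eq_erase,
    Finset.erase_idem]
  exact List.forall₂_cons_orderedInsert (Finset.pairwise_sort _ _)
    (fun y hy => hm_erase y ((Finset.mem_sort _).mp hy)) (hm a ha).le

theorem stmt_2_general (n : ℕ) (F : Finset (Finset ℕ))
    (hsub : ∀ A ∈ F, A ⊆ Finset.Icc 1 n)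
    (hinit : ∀ A B : Finset ℕ, A ⊆ Finset.Icc 1 n → prec A B → B ∈ F → A ∈ F) :
    Finset.shadow (F.filter (fun A => 1 ∉ A)) ⊆
      (F.filter (fun A => 1 ∈ A)).image (fun A => A.erase 1) := by
  intro B hB
  obtain ⟨A, hA, a, haA, rfl⟩ := Finset.mem_shadow_iff.mp hB
  obtain ⟨hAF, h1A⟩ := Finset.mem_filter.mp hA
  have h1_lt : ∀ x ∈ A, 1 < x := fun x hx =>
    lt_of_le_of_ne (Finset.mem_Icc.mp (hsub A hAF hx)).1 (fun h => h1A (h ▸ hx))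
  have h_sub : insert 1 (A.erase a) ⊆ Finset.Icc 1 n :=
    Finset.insert_subset (Finset.mem_Icc.mpr ⟨le_rfl, (h1_lt a haA).le.trans
      (Finset.mem_Icc.mp (hsub A hAF haA)).2⟩) ((Finset.erase_subset a A).trans (hsub A hAF))
  have h_mem : insert 1 (A.erase a) ∈ F :=
    hinit _ _ h_sub (prec_insert_erase_of_forall_lt haA h1_lt) hAF
  refine Finset.mem_image.mpr ⟨_, Finset.mem_filter.mpr ⟨h_mem, Finset.mem_insert_self _ _⟩, ?_⟩
  exact Finset.erase_insert fun h => h1A (Finset.mem_of_mem_erase h)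

theorem stmt_2 (n k : ℕ) (F : Finset (Finset ℕ))
    (hsub : ∀ A ∈ F, A ⊆ Finset.Icc 1 n) (hcard : ∀ A ∈ F, A.card = k)
    (hinit : ∀ A B : Finset ℕ, A ⊆ Finset.Icc 1 n → prec A B → B ∈ F → A ∈ F) :
    Finset.shadow (F.filter (fun A => 1 ∉ A)) ⊆
      (F.filter (fun A => 1 ∈ A)).image (fun A => A.erase 1) :=
  stmt_2_general n F hsub hinit
end

section
/- Let n, k, t be positive integers with k > t ≥ 2 and n ≥ 2(t−1)(k−t). Then binom(n−t−2, k−t−2) ≥ (1/2) · binom(n−3, k−t−2). -/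
lemma aux_choose_ratio (m r : ℕ) (hr : r ≤ m) (s : ℕ) :
    ((1 : ℚ) - r / (m + 1)) ^ s * ((m + s).choose r) ≤ (m.choose r) := by
  induction s with
  | zero => simp
  | succ s ih =>
    have hm1 : (0 : ℚ) < (m : ℚ) + 1 := by positivity
    have hms : (0 : ℚ) < (m : ℚ) + s + 1 := by positivity
    have hx : (0 : ℚ) ≤ 1 - r / (m + 1) := by
      rw [sub_nonneg, div_le_one hm1]
      have : (r : ℚ) ≤ m := by exact_mod_cast hr
      linarith
    -- key identity: (m+s).choose r * (m+s+1) = (m+s+1).choose r * (m+s+1 - r)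
    have hkey : ((m + s).choose r : ℚ) * ((m : ℚ) + s + 1)
        = ((m + s + 1).choose r : ℚ) * (((m : ℚ) + s + 1) - r) := by
      have h := Nat.choose_mul_succ_eq (m + s) r
      have hrle : r ≤ m + s + 1 := by omega
      have := congrArg (fun x : ℕ => (x : ℚ)) h
      push_cast [Nat.cast_sub hrle] at this
      push_cast
      linarith [this]
    have hstep : (1 - (r : ℚ) / (m + 1)) * ((m + s + 1).choose r : ℚ)
        ≤ ((m + s).choose r : ℚ) := by
      have hC : (0 : ℚ) ≤ ((m + s + 1).choose r : ℚ) := by positivity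
      have h1 : ((m + s).choose r : ℚ)
          = ((m + s + 1).choose r : ℚ) * (1 - (r : ℚ) / ((m : ℚ) + s + 1)) := by
        field_simp at hkey ⊢
        linarith [hkey]
      rw [h1]
      have hmono : (r : ℚ) / ((m : ℚ) + s + 1) ≤ (r : ℚ) / ((m : ℚ) + 1) := by
        apply div_le_div_of_nonneg_left _ hm1 (by linarith)
        · exact_mod_cast Nat.zero_le r
      nlinarith
    calc (1 - (r : ℚ) / (m + 1)) ^ (s + 1) * ((m + (s + 1)).choose r : ℚ)
        = (1 - (r : ℚ) / (m + 1)) ^ s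
            * ((1 - (r : ℚ) / (m + 1)) * ((m + s + 1).choose r : ℚ)) := by
          rw [show m + (s + 1) = m + s + 1 from rfl]; ring
      _ ≤ (1 - (r : ℚ) / (m + 1)) ^ s * ((m + s).choose r : ℚ) := by
          exact mul_le_mul_of_nonneg_left hstep (pow_nonneg hx s)
      _ ≤ (m.choose r : ℚ) := ih

lemma aux_half (m r s : ℕ) (hr : r ≤ m) (h : 2 * s * r ≤ m + 1) :
    (1 / 2 : ℚ) * ((m + s).choose r) ≤ (m.choose r) := by
  refine le_trans ?_ (aux_choose_ratio m r hr s)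
  have hC : (0 : ℚ) ≤ ((m + s).choose r : ℚ) := by positivity
  have hm1 : (0 : ℚ) < (m : ℚ) + 1 := by positivity
  have hb : (1 : ℚ) + s * (-(r / (m + 1))) ≤ (1 + (-(r / (m + 1)))) ^ s := by
    apply one_add_mul_le_pow
    have : (r : ℚ) / (m + 1) ≤ 1 := by
      rw [div_le_one hm1]
      have : (r : ℚ) ≤ m := by exact_mod_cast hr
      linarith
    linarith
  have hhalf : (1 / 2 : ℚ) ≤ (1 - (r : ℚ) / (m + 1)) ^ s := by
    have h2 : ((2 * s * r : ℕ) : ℚ) ≤ ((m + 1 : ℕ) : ℚ) := by exact_mod_cast h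
    push_cast at h2
    have : (s : ℚ) * ((r : ℚ) / (m + 1)) ≤ 1 / 2 := by
      rw [mul_div_assoc'] at *
      rw [div_le_div_iff₀ hm1 (by norm_num)]
      linarith
    calc (1 / 2 : ℚ) ≤ 1 + (s : ℚ) * (-(r / (m + 1))) := by linarith
      _ ≤ (1 + (-(r / (m + 1)))) ^ s := hb
      _ = (1 - (r : ℚ) / (m + 1)) ^ s := by ring_nf
  exact mul_le_mul_of_nonneg_right hhalf hC

theorem stmt_4 (n k t : ℕ) (hn1 : 1 ≤ n) (ht : 2 ≤ t) (hk : t < k)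
    (hn : 2 * (t - 1) * (k - t) ≤ n) :
    (1 / 2 : ℚ) * ((n - 3).choose (k - t - 2)) ≤ ((n - t - 2).choose (k - t - 2)) := by
  by_cases hkt : k ≤ t + 2
  · have : k - t - 2 = 0 := by omega
    simp [this]
    norm_num
  · have hk3 : t + 3 ≤ k := by omega
    have he : k - t = (k - t - 2) + 2 := by omega
    rw [he] at hn
    have hexp : 2 * (t - 1) * (k - t - 2 + 2) = 2 * ((t - 1) * (k - t - 2)) + 4 * (t - 1) := by
      ring
    rw [hexp] at hn
    set q := (t - 1) * (k - t - 2) with hq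
    have hq1 : k - t - 2 ≤ q := Nat.le_mul_of_pos_left _ (by omega)
    -- also q ≥ t - 1 since k - t - 2 ≥ 1
    have hq2 : t - 1 ≤ q := Nat.le_mul_of_pos_right _ (by omega)
    have hkn : k ≤ n := by omega
    have hM : n - 3 = (n - t - 2) + (t - 1) := by omega
    have hr : k - t - 2 ≤ n - t - 2 := by omega
    have hcond : 2 * (t - 1) * (k - t - 2) ≤ (n - t - 2) + 1 := by
      have : 2 * (t - 1) * (k - t - 2) = 2 * q := by rw [hq]; ring
      omega
    rw [hM]
    exact aux_half (n - t - 2) (k - t - 2) (t - 1) hr hcond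
end

section
/- Suppose F, G ⊆ 2^[n] are initial families that are cross-intersecting (F ∩ G ≠ ∅ for all F ∈ F, G ∈ G). Then the subfamilies F(\bar{1}) and G(\bar{1}) of sets avoiding the element 1 are cross 2-intersecting: |F ∩ G| ≥ 2 for all F ∈ F(\bar{1}), G ∈ G(\bar{1}). -/
/-!
Take `x ∈ A ∩ B`. Sorted, `insert 1 (A.erase x)` is `1` followed by a sublist of `A` one entry
shorter than `A`, which lies coordinatewise below the tail of `A`; so this set precedes `A` and,
`F` being initial, belongs to `F`. It therefore meets `B`, and not in `1 ∉ B`, so `A ∩ B` has a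
point other than `x`.
-/

theorem List.Sublist.forall₂_tail_of_length_eq_succ {α : Type*} [Preorder α] {l l' : List α}
    (h : l'.Sublist l) (hl : l.Pairwise (· ≤ ·)) (hlen : l.length = l'.length + 1) :
    List.Forall₂ (· ≤ ·) l' l.tail := by
  induction h with
  | slnil => simp at hlen
  | cons _ hsub _ =>
    rw [hsub.eq_of_length (by simpa using hlen.symm)]
    exact List.forall₂_same.2 fun x _ => le_refl x
  | @cons_cons l₁ l₂ a h ih =>
    obtain _ | ⟨b, t⟩ := l₂
    · simp at hlen
    · have hab : a ≤ b := (List.pairwise_cons.1 hl).1 b (by simp)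
      exact List.Forall₂.cons hab (ih (List.pairwise_cons.1 hl).2 (by simpa using hlen))

theorem Finset.sort_sublist_sort_of_subset {α : Type*} [LinearOrder α] {s t : Finset α}
    (h : s ⊆ t) : (s.sort (· ≤ ·)).Sublist (t.sort (· ≤ ·)) :=
  List.sublist_of_subperm_of_pairwise
    (List.subperm_of_subset (Finset.sort_nodup _ _) fun a ha => by simpa using h (by simpa using ha))
    (Finset.pairwise_sort _ _) (Finset.pairwise_sort _ _)

theorem prec_insert_erase_s6 {s : Finset ℕ} {a x : ℕ} (hx : x ∈ s) (ha : ∀ b ∈ s, a < b) :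
    prec (insert a (s.erase x)) s := by
  have hsort : (insert a (s.erase x)).sort (· ≤ ·) = a :: (s.erase x).sort (· ≤ ·) :=
    Finset.sort_insert _ (fun b hb => (ha b (Finset.mem_of_mem_erase hb)).le)
      fun h => (ha a (Finset.mem_of_mem_erase h)).false
  have hlen : (s.sort (· ≤ ·)).length = ((s.erase x).sort (· ≤ ·)).length + 1 := by
    simp [Finset.card_erase_add_one hx]
  have htail := (Finset.sort_sublist_sort_of_subset (s.erase_subset x)).forall₂_tail_of_length_eq_succ
    (Finset.pairwise_sort _ _) hlen
  unfold prec
  rw [hsort]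
  cases hs : s.sort (· ≤ ·) with
  | nil => simp [hs] at hlen
  | cons m t =>
    have hm : m ∈ s := (Finset.mem_sort (· ≤ ·)).1 (by simp [hs])
    rw [hs] at htail
    exact List.Forall₂.cons (ha m hm).le htail

theorem stmt_6_general (n : ℕ) (F G : Finset (Finset ℕ))
    (hFsub : ∀ A ∈ F, A ⊆ Finset.Icc 1 n)
    (hFinit : ∀ A B : Finset ℕ, A ⊆ Finset.Icc 1 n → prec A B → B ∈ F → A ∈ F)
    (hcross : ∀ A ∈ F, ∀ B ∈ G, (A ∩ B).Nonempty) :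
    ∀ A ∈ F, 1 ∉ A → ∀ B ∈ G, 1 ∉ B → 2 ≤ (A ∩ B).card := by
  intro A hA h1A B hB h1B
  obtain ⟨x, hx⟩ := hcross A hA B hB
  have hxA := (Finset.mem_inter.1 hx).1
  have hA_gt : ∀ b ∈ A, 1 < b := fun b hb =>
    lt_of_le_of_ne (Finset.mem_Icc.1 (hFsub A hA hb)).1 fun h => h1A (h ▸ hb)
  have hA'sub : insert 1 (A.erase x) ⊆ Finset.Icc 1 n := by
    refine Finset.insert_subset ?_ ((A.erase_subset x).trans (hFsub A hA))
    exact Finset.mem_Icc.2 ⟨le_rfl, (hA_gt x hxA).le.trans (Finset.mem_Icc.1 (hFsub A hA hxA)).2⟩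
  have hA'F := hFinit _ A hA'sub (prec_insert_erase_s6 hxA hA_gt) hA
  obtain ⟨y, hy⟩ := hcross _ hA'F B hB
  obtain ⟨hyA', hyB⟩ := Finset.mem_inter.1 hy
  obtain rfl | hyA := Finset.mem_insert.1 hyA'
  · exact absurd hyB h1B
  · exact Finset.one_lt_card.2 ⟨y, Finset.mem_inter.2 ⟨Finset.mem_of_mem_erase hyA, hyB⟩, x, hx,
      Finset.ne_of_mem_erase hyA⟩

theorem stmt_6 (n : ℕ) (F G : Finset (Finset ℕ))
    (hFsub : ∀ A ∈ F, A ⊆ Finset.Icc 1 n) (hGsub : ∀ B ∈ G, B ⊆ Finset.Icc 1 n)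
    (hFinit : ∀ A B : Finset ℕ, A ⊆ Finset.Icc 1 n → prec A B → B ∈ F → A ∈ F)
    (hGinit : ∀ A B : Finset ℕ, A ⊆ Finset.Icc 1 n → prec A B → B ∈ G → A ∈ G)
    (hcross : ∀ A ∈ F, ∀ B ∈ G, (A ∩ B).Nonempty) :
    ∀ A ∈ F, 1 ∉ A → ∀ B ∈ G, 1 ∉ B → 2 ≤ (A ∩ B).card :=
  stmt_6_general n F G hFsub hFinit hcross
end

section
/- Let F ⊆ binom([n],k) be intersecting with ϱ(F) ≤ 1/d for an integer d ≥ 2. Then for every d-element subset D of [n], the number of members of F disjoint from D is at least (d−1) times the number of members of F containing D: |F(\overline{D})| ≥ (d−1)|F(D)|. -/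
def deg (F : Finset (Finset ℕ)) (i : ℕ) : ℕ :=
  ((F.filter (fun A => i ∈ A)).image (fun A => A.erase i)).card

def rho (n : ℕ) (F : Finset (Finset ℕ)) : ℚ :=
  (((Finset.Icc 1 n).sup (deg F) : ℕ) : ℚ) / F.card

theorem stmt_9 (n k d : ℕ) (hd : 2 ≤ d) (F : Finset (Finset ℕ)) (hne : F.Nonempty)
    (hsub : ∀ A ∈ F, A ⊆ Finset.Icc 1 n) (hcard : ∀ A ∈ F, A.card = k)
    (hint : ∀ A ∈ F, ∀ B ∈ F, (A ∩ B).Nonempty)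
    (hrho : rho n F ≤ 1 / d) :
    ∀ D ⊆ Finset.Icc 1 n, D.card = d →
      (d - 1) * (F.filter (fun A => D ⊆ A)).card ≤
        (F.filter (fun A => A ∩ D = ∅)).card := by
  intro D hD hDcard
  have hF0 : 0 < F.card := hne.card_pos
  -- deg equals a filter cardinality
  have hdeg : ∀ i, deg F i = (F.filter (fun A => i ∈ A)).card := by
    intro i
    unfold deg
    apply Finset.card_image_of_injOn
    intro A hA B hB hAB
    simp only [Finset.coe_filter, Set.mem_setOf_eq] at hA hB
    have h := congrArg (insert i) hAB
    rwa [Finset.insert_erase hA.2, Finset.insert_erase hB.2] at h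
  -- sup bound from rho
  have hdq : (0:ℚ) < d := by exact_mod_cast (by omega : 0 < d)
  have hFq : (0:ℚ) < F.card := by exact_mod_cast hF0
  have hrho' := hrho
  unfold rho at hrho'
  rw [div_le_div_iff₀ hFq hdq] at hrho'
  have hq : (((Finset.Icc 1 n).sup (deg F) : ℕ) : ℚ) * d ≤ F.card := by linarith
  have hsup : ((Finset.Icc 1 n).sup (deg F)) * d ≤ F.card := by exact_mod_cast hq
  set c1 := (F.filter (fun A => D ⊆ A)).card with hc1
  set c0 := (F.filter (fun A => A ∩ D = ∅)).card with hc0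
  -- double counting
  have key1 : ∑ x ∈ D, (F.filter (fun A => x ∈ A)).card = ∑ A ∈ F, (A ∩ D).card := by
    simp only [Finset.card_filter]
    rw [Finset.sum_comm]
    apply Finset.sum_congr rfl
    intro A _
    rw [Finset.inter_comm, ← Finset.filter_mem_eq_inter, Finset.card_filter]
  -- upper bound
  have hub : ∑ x ∈ D, (F.filter (fun A => x ∈ A)).card ≤ F.card := by
    calc ∑ x ∈ D, (F.filter (fun A => x ∈ A)).card
        ≤ ∑ _x ∈ D, (Finset.Icc 1 n).sup (deg F) := by
          apply Finset.sum_le_sum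
          intro x hx
          rw [← hdeg]
          exact Finset.le_sup (hD hx)
      _ = ((Finset.Icc 1 n).sup (deg F)) * d := by
          rw [Finset.sum_const, hDcard, smul_eq_mul, mul_comm]
      _ ≤ F.card := hsup
  -- pointwise lower bound
  have hDne : D.Nonempty := by
    rw [← Finset.card_pos, hDcard]; omega
  have hlb : ∀ A ∈ F,
      (if D ⊆ A then d - 1 else 0) + (if A ∩ D = ∅ then 0 else 1) ≤ (A ∩ D).card := by
    intro A _
    by_cases h1 : D ⊆ A
    · have hAD : A ∩ D = D := Finset.inter_eq_right.mpr h1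
      have hADne : A ∩ D ≠ ∅ := by
        rw [hAD]; exact hDne.ne_empty
      rw [if_pos h1, if_neg hADne, hAD, hDcard]
      omega
    · rw [if_neg h1]
      by_cases h2 : A ∩ D = ∅
      · simp [h2]
      · rw [if_neg h2]
        have : (A ∩ D).Nonempty := Finset.nonempty_iff_ne_empty.mpr h2
        simpa using Finset.card_pos.mpr this
  have e1 : ∑ A ∈ F, (if D ⊆ A then d - 1 else 0) = (d - 1) * c1 := by
    rw [← Finset.sum_filter, Finset.sum_const, smul_eq_mul, mul_comm]
  have e2 : ∑ A ∈ F, (if A ∩ D = ∅ then 0 else 1) = F.card - c0 := by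
    have h : ∑ A ∈ F, (if A ∩ D = ∅ then 0 else 1)
        = (F.filter (fun A => ¬ (A ∩ D = ∅))).card := by
      rw [Finset.card_filter]
      apply Finset.sum_congr rfl
      intro A _
      by_cases h2 : A ∩ D = ∅ <;> simp [h2]
    rw [h, Finset.filter_not, Finset.card_sdiff_of_subset (Finset.filter_subset _ _)]
  have total : (d - 1) * c1 + (F.card - c0) ≤ F.card := by
    calc (d - 1) * c1 + (F.card - c0)
        = ∑ A ∈ F, ((if D ⊆ A then d - 1 else 0) + (if A ∩ D = ∅ then 0 else 1)) := by
          rw [Finset.sum_add_distrib, e1, e2]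
      _ ≤ ∑ A ∈ F, (A ∩ D).card := Finset.sum_le_sum hlb
      _ = ∑ x ∈ D, (F.filter (fun A => x ∈ A)).card := key1.symm
      _ ≤ F.card := hub
  have hc0le : c0 ≤ F.card := Finset.card_filter_le _ _
  set t := (d - 1) * c1 with ht
  omega
end

section
/- Suppose F ⊆ binom([n],k), G ⊆ binom([n],ℓ) are nonempty, initial, and cross-intersecting families. Then ϱ(F) + ϱ(G) ≥ 1. -/
namespace List
variable {α : Type*} [LinearOrder α]

theorem orderedInsert_eq_cons {i : α} {l : List α} (h : ∀ b ∈ l, i ≤ b) :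
    l.orderedInsert (· ≤ ·) i = i :: l := by
  cases l with
  | nil => rfl
  | cons b t => simp [h b mem_cons_self]

theorem forall₂_orderedInsert_erase {i j : α} {l : List α} (hl : l.Pairwise (· < ·))
    (hj : j ∈ l) (hij : i ≤ j) : Forall₂ (· ≤ ·) ((l.erase j).orderedInsert (· ≤ ·) i) l := by
  induction l generalizing i with
  | nil => simp at hj
  | cons a t ih =>
    obtain ⟨ha, ht⟩ := pairwise_cons.mp hl
    rcases eq_or_ne a j with rfl | haj
    · rw [erase_cons_head, orderedInsert_eq_cons fun b hb => hij.trans (ha b hb).le]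
      exact .cons hij (forall₂_refl t)
    have hjt : j ∈ t := (mem_cons.mp hj).resolve_left haj.symm
    have hat : ∀ b ∈ t.erase j, a ≤ b := fun b hb => (ha b (mem_of_mem_erase hb)).le
    rw [erase_cons_tail (by simpa using haj)]
    by_cases hia : i ≤ a
    · rw [orderedInsert_cons, if_pos hia, ← orderedInsert_eq_cons hat]
      exact .cons hia (ih ht hjt (ha j hjt).le)
    · rw [orderedInsert_cons, if_neg hia]
      exact .cons le_rfl (ih ht hjt hij)

end List

namespace Finset

section
variable {α : Type*} [LinearOrder α] {s : Finset α} {a : α}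

theorem sort_erase (s : Finset α) (a : α) : (s.erase a).sort = s.sort.erase a := by
  refine List.Perm.eq_of_pairwise' (pairwise_sort _ _)
    ((pairwise_sort _ _).sublist List.erase_sublist) ?_
  rw [← Multiset.coe_eq_coe, ← Multiset.coe_erase, sort_eq, sort_eq, erase_val]

theorem sort_insert_perm (ha : a ∉ s) : List.Perm (insert a s).sort (a :: s.sort) := by
  rw [← Multiset.coe_eq_coe, sort_eq, insert_val_of_notMem ha, ← Multiset.cons_coe, sort_eq]

theorem sort_insert_eq_orderedInsert_s11 (ha : a ∉ s) :
    (insert a s).sort = s.sort.orderedInsert (· ≤ ·) a :=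
  List.Perm.eq_of_pairwise' (pairwise_sort _ _) ((pairwise_sort _ _).orderedInsert _ _)
    ((sort_insert_perm ha).trans (List.perm_orderedInsert _ _ _).symm)

theorem sort_insert_of_forall_lt (h : ∀ b ∈ s, b < a) : (insert a s).sort = s.sort ++ [a] := by
  refine List.Perm.eq_of_pairwise' (pairwise_sort _ _) ?_
    ((sort_insert_perm fun ha => (h a ha).false).trans (List.perm_append_singleton _ _).symm)
  refine List.pairwise_append.mpr ⟨pairwise_sort _ _, List.pairwise_singleton _ _, ?_⟩
  simp only [mem_sort, List.mem_singleton, forall_eq]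
  exact fun b hb => (h b hb).le

end

section
variable {α : Type*} [DecidableEq α]

theorem memberSubfamily_comm (H : Finset (Finset α)) {a i : α} (hai : a ≠ i) :
    (H.memberSubfamily a).memberSubfamily i = (H.memberSubfamily i).memberSubfamily a := by
  ext s
  simp only [mem_memberSubfamily, mem_insert, insert_comm a i]
  grind

theorem nonMemberSubfamily_memberSubfamily_comm (H : Finset (Finset α)) {a i : α} (hai : a ≠ i) :
    (H.nonMemberSubfamily a).memberSubfamily i = (H.memberSubfamily i).nonMemberSubfamily a := by
  ext s
  simp only [mem_memberSubfamily, mem_nonMemberSubfamily, mem_insert]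
  grind

end

end Finset

open Finset

theorem prec_insert_erase_s11 {A : Finset ℕ} {i j : ℕ} (hj : j ∈ A) (hi : i ∉ A) (hij : i ≤ j) :
    prec (insert i (A.erase j)) A := by
  rw [prec, sort_insert_eq_orderedInsert_s11 (fun h => hi (mem_of_mem_erase h)), sort_erase]
  exact List.forall₂_orderedInsert_erase (sortedLT_sort A).pairwise (mem_sort _ |>.mpr hj) hij

theorem prec_insert_of_forall_lt {A B : Finset ℕ} {m : ℕ} (h : prec A B) (hA : ∀ x ∈ A, x < m)
    (hB : ∀ x ∈ B, x < m) : prec (insert m A) (insert m B) := by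
  rw [prec, sort_insert_of_forall_lt hA, sort_insert_of_forall_lt hB]
  exact List.rel_append h (.cons le_rfl .nil)

theorem deg_eq_card_memberSubfamily (H : Finset (Finset ℕ)) (i : ℕ) :
    deg H i = #(H.memberSubfamily i) := rfl

theorem deg_eq_card_filter (H : Finset (Finset ℕ)) (i : ℕ) : deg H i = #{A ∈ H | i ∈ A} :=
  card_image_of_injOn ((erase_injOn' i).mono fun _ hA => (mem_filter.mp hA).2)

theorem deg_eq_deg_memberSubfamily_add_deg_nonMemberSubfamily (H : Finset (Finset ℕ)) {a i : ℕ}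
    (hai : a ≠ i) :
    deg H i = deg (H.memberSubfamily a) i + deg (H.nonMemberSubfamily a) i := by
  simp only [deg_eq_card_memberSubfamily, memberSubfamily_comm H hai,
    nonMemberSubfamily_memberSubfamily_comm H hai, card_memberSubfamily_add_card_nonMemberSubfamily]

def degRatio (H : Finset (Finset ℕ)) (i : ℕ) : ℚ := deg H i / #H

theorem degRatio_le_rho {H : Finset (Finset ℕ)} {n i : ℕ} (hi : i ∈ Icc 1 n) :
    degRatio H i ≤ rho n H :=
  div_le_div_of_nonneg_right (by exact_mod_cast le_sup (f := deg H) hi) (Nat.cast_nonneg _)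

theorem div_le_add_div_add_or {K : Type*} [Field K] [LinearOrder K] [IsStrictOrderedRing K]
    {a b c d : K} (hc : 0 < c) (hd : 0 < d) :
    a / c ≤ (a + b) / (c + d) ∨ b / d ≤ (a + b) / (c + d) := by
  by_contra! h
  rw [div_lt_div_iff₀ (by positivity) hc, div_lt_div_iff₀ (by positivity) hd] at h
  linarith

theorem degRatio_memberSubfamily_le_or {H : Finset (Finset ℕ)} {a i : ℕ} (hai : a ≠ i)
    (hH : H.Nonempty) :
    (H.memberSubfamily a).Nonempty ∧ degRatio (H.memberSubfamily a) i ≤ degRatio H i ∨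
      (H.nonMemberSubfamily a).Nonempty ∧ degRatio (H.nonMemberSubfamily a) i ≤ degRatio H i := by
  have hdeg := deg_eq_deg_memberSubfamily_add_deg_nonMemberSubfamily H hai
  have hcard := card_memberSubfamily_add_card_nonMemberSubfamily a H
  rcases (H.memberSubfamily a).eq_empty_or_nonempty with hM | hM
  · right
    rw [hM, card_empty, zero_add] at hcard
    rw [hM, show deg ∅ i = 0 from rfl, zero_add] at hdeg
    exact ⟨card_pos.mp (hcard ▸ hH.card_pos), by rw [degRatio, degRatio, hcard, hdeg]⟩
  rcases (H.nonMemberSubfamily a).eq_empty_or_nonempty with hN | hN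
  · left
    rw [hN, card_empty, add_zero] at hcard
    rw [hN, show deg ∅ i = 0 from rfl, add_zero] at hdeg
    exact ⟨hM, by rw [degRatio, degRatio, hcard, hdeg]⟩
  simp only [degRatio, hdeg, ← hcard, hM, hN, true_and]
  push_cast
  exact div_le_add_div_add_or (by exact_mod_cast hM.card_pos) (by exact_mod_cast hN.card_pos)

theorem subset_Icc_of_subset_Icc_succ {A : Finset ℕ} {n : ℕ} (hA : A ⊆ Icc 1 (n + 1))
    (hn : n + 1 ∉ A) : A ⊆ Icc 1 n := by
  intro x hx
  have := mem_Icc.mp (hA hx)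
  have : x ≠ n + 1 := ne_of_mem_of_not_mem hx hn
  exact mem_Icc.mpr ⟨by omega, by omega⟩

theorem succ_notMem_of_subset_Icc {A : Finset ℕ} {n : ℕ} (hA : A ⊆ Icc 1 n) : n + 1 ∉ A :=
  fun h => by simpa using (mem_Icc.mp (hA h)).2

structure IsInitialFamily (n k : ℕ) (H : Finset (Finset ℕ)) : Prop where
  subset : ∀ A ∈ H, A ⊆ Icc 1 n
  card : ∀ A ∈ H, #A = k
  initial : ∀ A B : Finset ℕ, A ⊆ Icc 1 n → prec A B → B ∈ H → A ∈ H

namespace IsInitialFamily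
variable {n k : ℕ} {H : Finset (Finset ℕ)}

/-- Shifting `j` down to `i` injects the sets through `j` into the sets through `i`. -/
theorem deg_le_deg (hH : IsInitialFamily n k H) {i j : ℕ} (hi : 1 ≤ i) (hij : i ≤ j) :
    deg H j ≤ deg H i := by
  rw [deg_eq_card_filter, deg_eq_card_filter]
  rcases eq_or_ne i j with rfl | hne
  · exact le_rfl
  let f : Finset ℕ → Finset ℕ := fun A => if i ∈ A then A else insert i (A.erase j)
  have hjf : ∀ A, j ∈ A → (j ∈ f A ↔ i ∈ A) := by
    intro A hjA
    by_cases hiA : i ∈ A <;> simp [f, hiA, hjA, hne.symm]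
  refine card_le_card_of_injOn f (fun A hA => ?_) (fun A hA A' hA' hAA' => ?_)
  · obtain ⟨hAH, hjA⟩ := mem_filter.mp hA
    by_cases hiA : i ∈ A
    · simpa [f, hiA] using hAH
    rw [show f A = insert i (A.erase j) from if_neg hiA]
    refine mem_coe.mpr <| mem_filter.mpr ⟨hH.initial _ A ?_ (prec_insert_erase_s11 hjA hiA hij) hAH, ?_⟩
    · exact insert_subset (mem_Icc.mpr ⟨hi, hij.trans (mem_Icc.mp (hH.subset A hAH hjA)).2⟩)
        ((erase_subset _ _).trans (hH.subset A hAH))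
    · exact mem_insert_self _ _
  · have hjA := (mem_filter.mp hA).2
    have hjA' := (mem_filter.mp hA').2
    have hiff : i ∈ A ↔ i ∈ A' := by rw [← hjf A hjA, ← hjf A' hjA', hAA']
    by_cases hiA : i ∈ A
    · simpa [f, hiA, hiff.mp hiA] using hAA'
    have hiA' : i ∉ A' := hiff.not.mp hiA
    simp only [f, if_neg hiA, if_neg hiA'] at hAA'
    have := congrArg (erase · i) hAA'
    simp only [erase_insert (fun h => hiA (mem_of_mem_erase h)),
      erase_insert (fun h => hiA' (mem_of_mem_erase h))] at this
    rw [← insert_erase hjA, ← insert_erase hjA', this]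

theorem card_mul_le (hH : IsInitialFamily n k H) : k * #H ≤ n * deg H 1 :=
  calc k * #H = ∑ A ∈ H, #(Icc 1 n ∩ A) := by
        rw [sum_congr rfl fun A hA => by rw [inter_eq_right.mpr (hH.subset A hA), hH.card A hA],
          sum_const, smul_eq_mul, mul_comm]
    _ ≤ #(Icc 1 n) * deg H 1 := sum_card_inter_le fun j hj => by
        rw [← deg_eq_card_filter]
        exact hH.deg_le_deg le_rfl (mem_Icc.mp hj).1
    _ = n * deg H 1 := by rw [Nat.card_Icc, Nat.add_sub_cancel]

theorem div_le_degRatio (hH : IsInitialFamily n k H) (hne : H.Nonempty) :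
    (k : ℚ) / n ≤ degRatio H 1 := by
  rcases n.eq_zero_or_pos with rfl | hn
  · simp [degRatio]; positivity
  rw [degRatio, div_le_div_iff₀ (by exact_mod_cast hn) (by exact_mod_cast hne.card_pos)]
  exact_mod_cast (mul_comm (deg H 1) n) ▸ hH.card_mul_le

theorem nonMemberSubfamily (hH : IsInitialFamily (n + 1) k H) :
    IsInitialFamily n k (H.nonMemberSubfamily (n + 1)) where
  subset A hA := subset_Icc_of_subset_Icc_succ (hH.subset A (mem_nonMemberSubfamily.mp hA).1)
    (mem_nonMemberSubfamily.mp hA).2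
  card A hA := hH.card A (mem_nonMemberSubfamily.mp hA).1
  initial A B hA hAB hB := mem_nonMemberSubfamily.mpr
    ⟨hH.initial A B (hA.trans (Icc_subset_Icc_right n.le_succ)) hAB
      (mem_nonMemberSubfamily.mp hB).1, succ_notMem_of_subset_Icc hA⟩

theorem memberSubfamily (hH : IsInitialFamily (n + 1) k H) :
    IsInitialFamily n (k - 1) (H.memberSubfamily (n + 1)) where
  subset A hA := subset_Icc_of_subset_Icc_succ
    ((subset_insert _ _).trans (hH.subset _ (mem_memberSubfamily.mp hA).1))
    (mem_memberSubfamily.mp hA).2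
  card A hA := by
    have := hH.card _ (mem_memberSubfamily.mp hA).1
    rw [card_insert_of_notMem (mem_memberSubfamily.mp hA).2] at this
    omega
  initial A B hA hAB hB := by
    obtain ⟨hBH, hnB⟩ := mem_memberSubfamily.mp hB
    have hBn : ∀ x ∈ B, x < n + 1 := fun x hx =>
      Nat.lt_succ_of_le (mem_Icc.mp (subset_Icc_of_subset_Icc_succ
        ((subset_insert _ _).trans (hH.subset _ hBH)) hnB hx)).2
    refine mem_memberSubfamily.mpr ⟨hH.initial _ _ ?_ (prec_insert_of_forall_lt hAB
      (fun x hx => Nat.lt_succ_of_le (mem_Icc.mp (hA hx)).2) hBn) hBH, succ_notMem_of_subset_Icc hA⟩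
    exact insert_subset (by simp) (hA.trans (Icc_subset_Icc_right n.le_succ))

end IsInitialFamily

def CrossIntersecting {α : Type*} [DecidableEq α] (F G : Finset (Finset α)) : Prop :=
  ∀ A ∈ F, ∀ B ∈ G, (A ∩ B).Nonempty

namespace CrossIntersecting
variable {α : Type*} [DecidableEq α] {F G F' G' : Finset (Finset α)}

theorem symm (h : CrossIntersecting F G) : CrossIntersecting G F :=
  fun B hB A hA => inter_comm A B ▸ h A hA B hB

theorem mono (h : CrossIntersecting F G) (hF : F' ⊆ F) (hG : G' ⊆ G) : CrossIntersecting F' G' :=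
  fun A hA B hB => h A (hF hA) B (hG hB)

theorem memberSubfamily_nonMemberSubfamily (h : CrossIntersecting F G) (a : α) :
    CrossIntersecting (F.memberSubfamily a) (G.nonMemberSubfamily a) := by
  intro A hA B hB
  rw [mem_memberSubfamily] at hA
  rw [mem_nonMemberSubfamily] at hB
  obtain ⟨x, hx⟩ := h _ hA.1 B hB.1
  obtain ⟨rfl | hxA, hxB⟩ := And.imp_left mem_insert.mp (mem_inter.mp hx)
  · exact absurd hxB hB.2
  · exact ⟨x, mem_inter.mpr ⟨hxA, hxB⟩⟩

/-- If `A ∖ {n+1}` and `B ∖ {n+1}` were disjoint, some `j ≤ n` would avoid both, and shifting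
`n + 1` to `j` in `A` would give a set of `F` disjoint from `B`. -/
theorem memberSubfamily_memberSubfamily {n k l : ℕ} {F G : Finset (Finset ℕ)}
    (h : CrossIntersecting F G) (hF : IsInitialFamily (n + 1) k F)
    (hG : IsInitialFamily (n + 1) l G) (hkl : k + l ≤ n + 1) :
    CrossIntersecting (F.memberSubfamily (n + 1)) (G.memberSubfamily (n + 1)) := by
  intro C hC D hD
  obtain ⟨hCF, hnC⟩ := mem_memberSubfamily.mp hC
  obtain ⟨hDG, hnD⟩ := mem_memberSubfamily.mp hD
  have hCk := hF.card _ hCF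
  have hDl := hG.card _ hDG
  rw [card_insert_of_notMem hnC] at hCk
  rw [card_insert_of_notMem hnD] at hDl
  have hcard : #(C ∪ D) < #(Icc 1 n) := by
    have := card_union_le C D
    rw [Nat.card_Icc]
    omega
  obtain ⟨j, hj, hjCD⟩ := exists_mem_notMem_of_card_lt_card hcard
  have hjn := mem_Icc.mp hj
  have hjA : j ∉ insert (n + 1) C := by
    rw [mem_insert, not_or]
    exact ⟨by omega, fun h => hjCD (mem_union_left D h)⟩
  have hjCF : insert j C ∈ F := by
    have hprec := prec_insert_erase_s11 (mem_insert_self _ C) hjA (by omega)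
    rw [erase_insert hnC] at hprec
    refine hF.initial _ _ ?_ hprec hCF
    exact insert_subset (mem_Icc.mpr ⟨hjn.1, by omega⟩)
      ((subset_insert _ _).trans (hF.subset _ hCF))
  obtain ⟨x, hx⟩ := h _ hjCF _ hDG
  obtain ⟨rfl | hxC, rfl | hxD⟩ := And.imp mem_insert.mp mem_insert.mp (mem_inter.mp hx)
  · omega
  · exact absurd (mem_union_right C hxD) hjCD
  · exact absurd hxC hnC
  · exact ⟨x, mem_inter.mpr ⟨hxC, hxD⟩⟩

end CrossIntersecting

theorem one_le_degRatio_add_degRatio {n k l : ℕ} {F G : Finset (Finset ℕ)}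
    (hF : IsInitialFamily n k F) (hG : IsInitialFamily n l G) (hFne : F.Nonempty)
    (hGne : G.Nonempty) (hFG : CrossIntersecting F G) :
    1 ≤ degRatio F 1 + degRatio G 1 := by
  induction n generalizing k l F G with
  | zero =>
    obtain ⟨A, hA⟩ := hFne
    obtain ⟨B, hB⟩ := hGne
    obtain ⟨x, hx⟩ := hFG A hA B hB
    simpa using hF.subset A hA (mem_inter.mp hx).1
  | succ n ih =>
    obtain ⟨A, hA⟩ := hFne
    obtain ⟨B, hB⟩ := hGne
    obtain ⟨x, hx⟩ := hFG A hA B hB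
    obtain ⟨hxA, hxB⟩ := mem_inter.mp hx
    by_cases hkl : n + 1 ≤ k + l
    · calc (1 : ℚ) ≤ k / (n + 1 : ℕ) + l / (n + 1 : ℕ) := by
            rw [← add_div, le_div_iff₀ (by positivity), one_mul]
            exact_mod_cast hkl
        _ ≤ degRatio F 1 + degRatio G 1 :=
            add_le_add (hF.div_le_degRatio ⟨A, hA⟩) (hG.div_le_degRatio ⟨B, hB⟩)
    have hk := (hF.card A hA).symm ▸ card_pos.mpr ⟨x, hxA⟩
    have hl := (hG.card B hB).symm ▸ card_pos.mpr ⟨x, hxB⟩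
    have h1n : n + 1 ≠ 1 := by omega
    have step : ∀ {k' l' : ℕ} {P Q : Finset (Finset ℕ)}, IsInitialFamily n k' P →
        IsInitialFamily n l' Q → CrossIntersecting P Q → P.Nonempty ∧ degRatio P 1 ≤ degRatio F 1 →
        Q.Nonempty ∧ degRatio Q 1 ≤ degRatio G 1 → 1 ≤ degRatio F 1 + degRatio G 1 := by
      rintro k' l' P Q hP hQ hPQ ⟨hPne, hPF⟩ ⟨hQne, hQG⟩
      exact (ih hP hQ hPne hQne hPQ).trans (add_le_add hPF hQG)
    rcases degRatio_memberSubfamily_le_or h1n ⟨A, hA⟩ with hPF | hPF <;>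
      rcases degRatio_memberSubfamily_le_or h1n ⟨B, hB⟩ with hQG | hQG
    · exact step hF.memberSubfamily hG.memberSubfamily
        (hFG.memberSubfamily_memberSubfamily hF hG (by omega)) hPF hQG
    · exact step hF.memberSubfamily hG.nonMemberSubfamily
        (hFG.memberSubfamily_nonMemberSubfamily _) hPF hQG
    · exact step hF.nonMemberSubfamily hG.memberSubfamily
        (hFG.symm.memberSubfamily_nonMemberSubfamily _).symm hPF hQG
    · exact step hF.nonMemberSubfamily hG.nonMemberSubfamily
        (hFG.mono (filter_subset _ _) (filter_subset _ _)) hPF hQG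

theorem stmt_11 (n k l : ℕ) (F G : Finset (Finset ℕ)) (hFne : F.Nonempty) (hGne : G.Nonempty)
    (hFsub : ∀ A ∈ F, A ⊆ Finset.Icc 1 n) (hFcard : ∀ A ∈ F, A.card = k)
    (hGsub : ∀ B ∈ G, B ⊆ Finset.Icc 1 n) (hGcard : ∀ B ∈ G, B.card = l)
    (hFinit : ∀ A B : Finset ℕ, A ⊆ Finset.Icc 1 n → prec A B → B ∈ F → A ∈ F)
    (hGinit : ∀ A B : Finset ℕ, A ⊆ Finset.Icc 1 n → prec A B → B ∈ G → A ∈ G)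
    (hcross : ∀ A ∈ F, ∀ B ∈ G, (A ∩ B).Nonempty) :
    1 ≤ rho n F + rho n G := by
  obtain ⟨A, hA⟩ := hFne
  obtain ⟨B, hB⟩ := hGne
  obtain ⟨x, hx⟩ := hcross A hA B hB
  have h1 : 1 ∈ Icc 1 n := by
    have := mem_Icc.mp (hFsub A hA (mem_inter.mp hx).1)
    exact mem_Icc.mpr ⟨le_rfl, by omega⟩
  calc 1 ≤ degRatio F 1 + degRatio G 1 :=
        one_le_degRatio_add_degRatio ⟨hFsub, hFcard, hFinit⟩ ⟨hGsub, hGcard, hGinit⟩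
          ⟨A, hA⟩ ⟨B, hB⟩ hcross
    _ ≤ rho n F + rho n G := add_le_add (degRatio_le_rho h1) (degRatio_le_rho h1)
end

section
/- If P ⊆ binom([n],k) and R ⊆ binom([n],ℓ) are nonempty cross-intersecting families, then ϱ(P) ≥ 1/ℓ and ϱ(R) ≥ 1/k. -/
lemma deg_eq_filter_card (F : Finset (Finset ℕ)) (i : ℕ) :
    deg F i = (F.filter (fun A => i ∈ A)).card := by
  unfold deg
  apply Finset.card_image_of_injOn
  intro A hA B hB h
  simp only [Finset.mem_coe, Finset.mem_filter] at hA hB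
  simp only at h
  have : insert i (A.erase i) = insert i (B.erase i) := by rw [h]
  rwa [Finset.insert_erase hA.2, Finset.insert_erase hB.2] at this

lemma key (n : ℕ) (F : Finset (Finset ℕ)) (hF : F.Nonempty) (B : Finset ℕ)
    (hB : B ⊆ Finset.Icc 1 n) (h : ∀ A ∈ F, (A ∩ B).Nonempty) :
    (1 : ℚ) / B.card ≤ rho n F := by
  have hBne : B.Nonempty := by
    obtain ⟨A, hA⟩ := hF
    obtain ⟨x, hx⟩ := h A hA
    exact ⟨x, (Finset.mem_inter.mp hx).2⟩
  set s : ℕ := (Finset.Icc 1 n).sup (deg F) with hs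
  have hsum : F.card ≤ ∑ i ∈ B, (F.filter (fun A => i ∈ A)).card := by
    have : ∑ i ∈ B, (F.filter (fun A => i ∈ A)).card
        = ∑ A ∈ F, (A ∩ B).card := by
      simp only [Finset.card_filter]
      rw [Finset.sum_comm]
      congr 1; ext A
      rw [Finset.sum_ite_mem, Finset.inter_comm, Finset.card_eq_sum_ones]
    rw [this]
    calc F.card = ∑ _A ∈ F, 1 := by simp
    _ ≤ ∑ A ∈ F, (A ∩ B).card := by
        apply Finset.sum_le_sum
        intro A hA
        exact Finset.card_pos.mpr (h A hA)
  have hle : F.card ≤ B.card * s := by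
    calc F.card ≤ ∑ i ∈ B, (F.filter (fun A => i ∈ A)).card := hsum
    _ ≤ ∑ _i ∈ B, s := by
        apply Finset.sum_le_sum
        intro i hi
        rw [← deg_eq_filter_card]
        exact Finset.le_sup (hB hi)
    _ = B.card * s := by rw [Finset.sum_const, smul_eq_mul]
  have hFpos : (0 : ℚ) < F.card := by exact_mod_cast Finset.card_pos.mpr hF
  have hBpos : (0 : ℚ) < B.card := by exact_mod_cast Finset.card_pos.mpr hBne
  rw [rho, div_le_div_iff₀ hBpos hFpos, one_mul]
  exact_mod_cast le_of_le_of_eq hle (mul_comm _ _)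

theorem stmt_12 (n k l : ℕ) (P R : Finset (Finset ℕ)) (hPne : P.Nonempty) (hRne : R.Nonempty)
    (hPsub : ∀ A ∈ P, A ⊆ Finset.Icc 1 n) (hPcard : ∀ A ∈ P, A.card = k)
    (hRsub : ∀ B ∈ R, B ⊆ Finset.Icc 1 n) (hRcard : ∀ B ∈ R, B.card = l)
    (hcross : ∀ A ∈ P, ∀ B ∈ R, (A ∩ B).Nonempty) :
    (1 : ℚ) / l ≤ rho n P ∧ (1 : ℚ) / k ≤ rho n R := by
  obtain ⟨B, hB⟩ := hRne
  obtain ⟨A, hA⟩ := hPne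
  constructor
  · have := key n P ⟨A, hA⟩ B (hRsub B hB) (fun A' hA' => hcross A' hA' B hB)
    rwa [hRcard B hB] at this
  · have := key n R ⟨B, hB⟩ A (hPsub A hA) (fun B' hB' => by
      rw [Finset.inter_comm]; exact hcross A hA B' hB')
    rwa [hPcard A hA] at this
end

section
/- Let F ⊆ binom([n],k) be an initial t-intersecting family, and let P ⊆ [t+1] with |P| ≤ t−1. Then the family F(P,[t+1]) = {A \ [t+1] : A ∈ F, A ∩ [t+1] = P} is (1 + 2(t − |P|))-intersecting. -/
open Finset

namespace List

variable {α : Type*} [LinearOrder α] {l : List α}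

lemma le_length_filter_le_getElem (hl : l.Pairwise (· ≤ ·)) {i : ℕ} (hi : i < l.length) :
    i + 1 ≤ (l.filter (· ≤ l[i])).length := by
  have htake : (l.take (i + 1)).filter (· ≤ l[i]) = l.take (i + 1) := by
    refine filter_eq_self.2 fun a ha => ?_
    obtain ⟨j, hj, rfl⟩ := mem_take_iff_getElem.1 ha
    rcases (show j ≤ i by omega).lt_or_eq with hji | rfl
    · simpa using pairwise_iff_getElem.1 hl j i _ hi hji
    · simp
  calc i + 1 = (l.take (i + 1)).length := by simp only [length_take]; omega
    _ ≤ _ := by rw [← htake]; exact ((take_sublist _ _).filter _).length_le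

lemma length_filter_le_le_of_lt_getElem (hl : l.Pairwise (· ≤ ·)) {i : ℕ} {x : α} (hi : i < l.length)
    (hx : x < l[i]) : (l.filter (· ≤ x)).length ≤ i := by
  have hdrop : (l.drop i).filter (· ≤ x) = [] := by
    refine filter_eq_nil_iff.2 fun a ha => ?_
    obtain ⟨j, hj, rfl⟩ := mem_drop_iff_getElem.1 ha
    have : l[i] ≤ l[i + j] := by
      rcases j.eq_zero_or_pos with rfl | hj0
      · simp
      · exact pairwise_iff_getElem.1 hl i (i + j) hi _ (by omega)
    simpa using hx.trans_le this
  calc (l.filter (· ≤ x)).length = ((l.take i).filter (· ≤ x)).length := by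
        conv_lhs => rw [← take_append_drop i l, filter_append, hdrop, append_nil]
    _ ≤ (l.take i).length := length_filter_le _ _
    _ ≤ i := length_take_le _ _

lemma forall₂_le_of_length_filter_le {m : List α} (hl : l.Pairwise (· ≤ ·))
    (hm : m.Pairwise (· ≤ ·)) (hlen : l.length = m.length)
    (hcount : ∀ x, (m.filter (· ≤ x)).length ≤ (l.filter (· ≤ x)).length) :
    Forall₂ (· ≤ ·) l m := by
  refine forall₂_iff_get.2 ⟨hlen, fun i hil him => ?_⟩
  simp only [get_eq_getElem]
  by_contra! hlt
  have := le_length_filter_le_getElem hm him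
  have := length_filter_le_le_of_lt_getElem hl hil hlt
  have := hcount m[i]
  omega

end List

namespace Finset

lemma length_filter_sort {α : Type*} (r : α → α → Prop) [DecidableRel r] [IsTrans α r]
    [Std.Antisymm r] [Std.Total r] (s : Finset α) (p : α → Prop) [DecidablePred p] :
    ((s.sort r).filter p).length = #(s.filter p) := by
  rw [← Multiset.coe_card, ← Multiset.filter_coe, sort_eq]
  rfl

lemma card_inter_eq_add_of_inter_eq {α : Type*} [DecidableEq α] {A B I P : Finset α}
    (hA : A ∩ I = P) (hB : B ∩ I = P) : #(A ∩ B) = #P + #((A \ I) ∩ (B \ I)) := by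
  rw [← card_inter_add_card_sdiff (A ∩ B) I, inter_inter_distrib_right, hA, hB, inter_self]
  congr 2
  exact inf_sdiff

end Finset

lemma prec_of_card_filter_le {S T : Finset ℕ} (hcard : #S = #T)
    (hcount : ∀ x, #(T.filter (· ≤ x)) ≤ #(S.filter (· ≤ x))) : prec S T :=
  List.forall₂_le_of_length_filter_le (pairwise_sort _ _) (pairwise_sort _ _)
    (by simp only [length_sort, hcard]) (by simpa only [length_filter_sort] using hcount)

lemma prec_sdiff_union {B D E : Finset ℕ} (hD : D ⊆ B) (hE : Disjoint E B) (hcard : #D = #E)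
    (hED : ∀ e ∈ E, ∀ d ∈ D, e ≤ d) : prec (B \ D ∪ E) B := by
  have hdisj : Disjoint (B \ D) E := (hE.mono_right sdiff_subset).symm
  refine prec_of_card_filter_le ?_ fun x => ?_
  · rw [card_union_of_disjoint hdisj, card_sdiff_of_subset hD, ← hcard]
    have := card_le_card hD
    omega
  · have hDE : #(D.filter (· ≤ x)) ≤ #(E.filter (· ≤ x)) := by
      obtain hempty | ⟨d, hd⟩ := (D.filter (· ≤ x)).eq_empty_or_nonempty
      · simp [hempty]
      · obtain ⟨hd, hdx⟩ := mem_filter.1 hd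
        rw [filter_true_of_mem fun e he => (hED e he d hd).trans hdx, ← hcard]
        exact card_filter_le _ _
    conv_lhs => rw [← sdiff_union_of_subset hD]
    rw [filter_union, filter_union, card_union_of_disjoint (disjoint_filter_filter hdisj),
      card_union_of_disjoint (disjoint_filter_filter sdiff_disjoint)]
    omega

section InitialFamily

variable {n t : ℕ} {F : Finset (Finset ℕ)}

lemma add_card_le_card_inter_of_shift (hsub : ∀ A ∈ F, A ⊆ Icc 1 n)
    (hinit : ∀ A B : Finset ℕ, A ⊆ Icc 1 n → prec A B → B ∈ F → A ∈ F)
    (hint : ∀ A ∈ F, ∀ B ∈ F, t ≤ #(A ∩ B))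
    {A B D E : Finset ℕ} (hA : A ∈ F) (hB : B ∈ F) (hD : D ⊆ A ∩ B)
    (hE : Disjoint E (A ∪ B)) (hEpos : ∀ e ∈ E, 1 ≤ e) (hcard : #D = #E)
    (hED : ∀ e ∈ E, ∀ d ∈ D, e ≤ d) : t + #D ≤ #(A ∩ B) := by
  have hDB : D ⊆ B := hD.trans inter_subset_right
  have hEn : E ⊆ Icc 1 n := fun e he => by
    obtain ⟨d, hd⟩ := card_pos.1 (hcard ▸ card_pos.2 ⟨e, he⟩)
    exact mem_Icc.2 ⟨hEpos e he, (hED e he d hd).trans (mem_Icc.1 (hsub B hB (hDB hd))).2⟩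
  have hB' : B \ D ∪ E ∈ F :=
    hinit _ B (union_subset (sdiff_subset.trans (hsub B hB)) hEn)
      (prec_sdiff_union hDB (hE.mono_right subset_union_right) hcard hED) hB
  have hAB' : A ∩ (B \ D ∪ E) = (A ∩ B) \ D := by
    rw [inter_union_distrib_left, disjoint_iff_inter_eq_empty.1
      (hE.mono_right subset_union_left).symm, union_empty, inter_sdiff_assoc]
  have hinter := hint A hA _ hB'
  rw [hAB', card_sdiff_of_subset hD] at hinter
  have := card_le_card hD
  omega

lemma add_min_le_card_inter (hsub : ∀ A ∈ F, A ⊆ Icc 1 n)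
    (hinit : ∀ A B : Finset ℕ, A ⊆ Icc 1 n → prec A B → B ∈ F → A ∈ F)
    (hint : ∀ A ∈ F, ∀ B ∈ F, t ≤ #(A ∩ B))
    {u : ℕ} {A B P : Finset ℕ} (hA : A ∈ F) (hB : B ∈ F) (hP : P ⊆ Icc 1 u)
    (hAP : A ∩ Icc 1 u = P) (hBP : B ∩ Icc 1 u = P) :
    t + min #((A \ Icc 1 u) ∩ (B \ Icc 1 u)) (u - #P) ≤ #(A ∩ B) := by
  set C := (A \ Icc 1 u) ∩ (B \ Icc 1 u)
  obtain ⟨D, hDC, hD⟩ := exists_subset_card_eq (min_le_left #C (u - #P))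
  obtain ⟨E, hEP, hE⟩ := exists_subset_card_eq (s := Icc 1 u \ P) (n := min #C (u - #P))
    (by simp [card_sdiff_of_subset hP])
  have hCAB : C ⊆ A ∩ B := inter_subset_inter sdiff_subset sdiff_subset
  have hEdisj : Disjoint E (A ∪ B) := by
    refine disjoint_left.2 fun e he heAB => (mem_sdiff.1 (hEP he)).2 ?_
    have heu := (mem_sdiff.1 (hEP he)).1
    rcases mem_union.1 heAB with heA | heB
    · exact hAP ▸ mem_inter.2 ⟨heA, heu⟩
    · exact hBP ▸ mem_inter.2 ⟨heB, heu⟩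
  have hED : ∀ e ∈ E, ∀ d ∈ D, e ≤ d := fun e he d hd => by
    have heu := (mem_Icc.1 (mem_sdiff.1 (hEP he)).1).2
    obtain ⟨hdB, hdu⟩ := mem_sdiff.1 (mem_inter.1 (hDC hd)).2
    have hd1 := (mem_Icc.1 (hsub B hB hdB)).1
    rw [mem_Icc] at hdu
    omega
  have := add_card_le_card_inter_of_shift hsub hinit hint hA hB (hDC.trans hCAB) hEdisj
    (fun e he => (mem_Icc.1 (mem_sdiff.1 (hEP he)).1).1) (hD.trans hE.symm) hED
  rwa [hD] at this

end InitialFamily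

theorem stmt_14_general (n t : ℕ) (ht : 1 ≤ t) (F : Finset (Finset ℕ))
    (hsub : ∀ A ∈ F, A ⊆ Finset.Icc 1 n)
    (hinit : ∀ A B : Finset ℕ, A ⊆ Finset.Icc 1 n → prec A B → B ∈ F → A ∈ F)
    (hint : ∀ A ∈ F, ∀ B ∈ F, t ≤ (A ∩ B).card)
    (P : Finset ℕ) (hP : P ⊆ Finset.Icc 1 (t + 1)) (hPcard : P.card ≤ t - 1) :
    ∀ A ∈ F, A ∩ Finset.Icc 1 (t + 1) = P → ∀ B ∈ F, B ∩ Finset.Icc 1 (t + 1) = P →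
      1 + 2 * (t - P.card) ≤
        ((A \ Finset.Icc 1 (t + 1)) ∩ (B \ Finset.Icc 1 (t + 1))).card := by
  intro A hA hAP B hB hBP
  have hshift := add_min_le_card_inter hsub hinit hint hA hB hP hAP hBP
  have hsplit := card_inter_eq_add_of_inter_eq hAP hBP
  omega

theorem stmt_14 (n k t : ℕ) (ht : 1 ≤ t) (F : Finset (Finset ℕ))
    (hsub : ∀ A ∈ F, A ⊆ Finset.Icc 1 n) (hcard : ∀ A ∈ F, A.card = k)
    (hinit : ∀ A B : Finset ℕ, A ⊆ Finset.Icc 1 n → prec A B → B ∈ F → A ∈ F)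
    (hint : ∀ A ∈ F, ∀ B ∈ F, t ≤ (A ∩ B).card)
    (P : Finset ℕ) (hP : P ⊆ Finset.Icc 1 (t + 1)) (hPcard : P.card ≤ t - 1) :
    ∀ A ∈ F, A ∩ Finset.Icc 1 (t + 1) = P → ∀ B ∈ F, B ∩ Finset.Icc 1 (t + 1) = P →
      1 + 2 * (t - P.card) ≤
        ((A \ Finset.Icc 1 (t + 1)) ∩ (B \ Finset.Icc 1 (t + 1))).card :=
  stmt_14_general n t ht F hsub hinit hint P hP hPcard
end

section
/- Suppose F ⊆ binom([n],k) is a nontrivial r-wise t-intersecting family with r ≥ 3 (nontrivial means |∩_{F∈F} F| < t). Then F is 2-wise (t+r−2)-intersecting, i.e., |A ∩ B| ≥ t + r − 2 for all A, B ∈ F. -/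
/-!
Let `S` be the common intersection of at most `j` members of `F`, and suppose every `G ∈ F`
meets `S` in at least `m` elements while `⋂ F` has fewer than `m`. If `|S| ≤ m`, every
`G ∩ S` would be all of `S`, so `S ⊆ ⋂ F` and `|⋂ F| ≥ m`; hence `|S| ≥ m + 1`. Thus
`F` being `(j + 1)`-wise `m`-intersecting makes it `j`-wise `(m + 1)`-intersecting, and
`r - 2` such steps turn `r`-wise `t`-intersecting into `2`-wise `(t + r - 2)`-intersecting.
-/

open Finset

variable {α : Type*} [DecidableEq α]

/-- `r`-tuples of members with repetition, as in the paper, are replaced by nonempty subfamilies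
of at most `r` members; the two formulations are equivalent. -/
def IsWiseIntersecting (F : Finset (Finset α)) (r t : ℕ) : Prop :=
  ∀ s ⊆ F, ∀ hs : s.Nonempty, s.card ≤ r → t ≤ (s.inf' hs id).card

theorem Finset.exists_fin_range_eq {β : Type*} {s : Finset β} (hs : s.Nonempty) {r : ℕ}
    (hr : s.card ≤ r) : ∃ f : Fin r → β, Set.range f = s := by
  obtain ⟨x₀, hx₀⟩ := hs
  refine ⟨fun i => s.toList[(i : ℕ)]?.getD x₀, Set.Subset.antisymm ?_ fun x hx => ?_⟩
  · rintro _ ⟨i, rfl⟩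
    show s.toList[(i : ℕ)]?.getD x₀ ∈ s
    cases h : s.toList[(i : ℕ)]? with
    | none => exact hx₀
    | some y => exact mem_toList.mp (List.mem_of_getElem? h)
  · obtain ⟨i, hi, rfl⟩ := List.getElem_of_mem (mem_toList.mpr hx)
    exact ⟨⟨i, hi.trans_le (length_toList s ▸ hr)⟩, by simp [List.getElem?_eq_getElem hi]⟩

theorem IsWiseIntersecting.of_forall_fin {F : Finset (Finset α)} {r t : ℕ} (hr : 0 < r)
    (h : ∀ f : Fin r → Finset α, (∀ i, f i ∈ F) →
      t ≤ (univ.inf' ⟨⟨0, hr⟩, mem_univ _⟩ f).card) :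
    IsWiseIntersecting F r t := by
  intro s hsF hs hsr
  obtain ⟨f, hf⟩ := exists_fin_range_eq hs hsr
  have hfs : ∀ i, f i ∈ s := fun i => mem_coe.mp (hf ▸ Set.mem_range_self i)
  refine (h f fun i => hsF (hfs i)).trans (card_le_card ?_)
  refine le_inf' hs id fun x hx => ?_
  obtain ⟨i, rfl⟩ : x ∈ Set.range f := hf ▸ mem_coe.mpr hx
  exact inf'_le f (mem_univ i)

theorem lt_card_of_forall_le_card_inter {F : Finset (Finset α)} (hne : F.Nonempty) {m : ℕ}
    (hF : (F.inf' hne id).card < m) {S : Finset α} (hS : ∀ G ∈ F, m ≤ (G ∩ S).card) :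
    m < S.card := by
  by_contra! hSm
  have hSG : ∀ G ∈ F, S ⊆ G := fun G hG =>
    inter_eq_right.mp (eq_of_subset_of_card_le inter_subset_right (hSm.trans (hS G hG)))
  obtain ⟨A, hA⟩ := hne
  have hmS : m ≤ S.card := (hS A hA).trans (card_le_card inter_subset_right)
  exact hF.not_ge (hmS.trans (card_le_card (le_inf' _ id hSG)))

theorem IsWiseIntersecting.succ_of_card_inf'_lt {F : Finset (Finset α)} {j m : ℕ}
    (h : IsWiseIntersecting F (j + 1) m) (hne : F.Nonempty) (hF : (F.inf' hne id).card < m) :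
    IsWiseIntersecting F j (m + 1) := by
  intro s hsF hs hsj
  refine lt_card_of_forall_le_card_inter hne hF fun G hG => ?_
  have hGs := h (insert G s) (insert_subset hG hsF) (insert_nonempty G s)
    ((card_insert_le G s).trans (Nat.succ_le_succ hsj))
  rwa [inf'_insert (H := hs)] at hGs

theorem IsWiseIntersecting.add_of_card_inf'_lt {F : Finset (Finset α)} {j t d : ℕ}
    (h : IsWiseIntersecting F (j + d) t) (hne : F.Nonempty) (hF : (F.inf' hne id).card < t) :
    IsWiseIntersecting F j (t + d) := by
  induction d generalizing j with
  | zero => exact h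
  | succ d ih =>
    rw [← add_assoc]
    refine (ih (j := j + 1) (by rwa [add_right_comm, add_assoc])).succ_of_card_inf'_lt hne ?_
    omega

theorem IsWiseIntersecting.le_card_inter {F : Finset (Finset α)} {m : ℕ}
    (h : IsWiseIntersecting F 2 m) {A B : Finset α} (hA : A ∈ F) (hB : B ∈ F) :
    m ≤ (A ∩ B).card := by
  have hAB := h {A, B} (insert_subset hA (singleton_subset_iff.mpr hB))
    (insert_nonempty A {B}) card_le_two
  rwa [inf'_insert (H := singleton_nonempty B), inf'_singleton] at hAB

theorem stmt_15 (r t : ℕ) (hr : 3 ≤ r) (F : Finset (Finset ℕ))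
    (hne : F.Nonempty)
    (hint : ∀ f : Fin r → Finset ℕ, (∀ i, f i ∈ F) →
      t ≤ (Finset.univ.inf' ⟨⟨0, by omega⟩, Finset.mem_univ _⟩ f).card)
    (hnontriv : (F.inf' hne id).card < t) :
    ∀ A ∈ F, ∀ B ∈ F, t + r - 2 ≤ (A ∩ B).card := by
  intro A hA B hB
  have hrwise : IsWiseIntersecting F (2 + (r - 2)) t := by
    rw [Nat.add_sub_cancel' (by omega)]
    exact IsWiseIntersecting.of_forall_fin (by omega) hint
  have h2wise := hrwise.add_of_card_inf'_lt hne hnontriv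
  rw [Nat.add_sub_assoc (by omega)]
  exact h2wise.le_card_inter hA hB
end
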